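/- arXiv:math/0305376 — 6 statements merged into one kernel-verified Lean document; each statement's English description precedes it below -/
import Mathlib

section
/- Let R be a domain over a field F, and let x, y be nonzero elements of R such that xy = γyx for some nonzero γ in F. If both x and y are FA-elements (i.e., for every a in R there is a polynomial f(t) = c₀tᴺ + c₁tᴺ⁻¹ + ⋯ + c_N with c₀, c_N ≠ 0 such that c₀xᴺa + c₁xᴺ⁻¹ax + ⋯ + c_N a xᴺ = 0, and similarly for y), then the product xy is also an FA-element of R. -/
/-!
Write `w = x y`, so that `x w = γ w x`. Fix `a` and a box `π ≤ S`, `θ ≤ T`, and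
send the monomial `s^π t^θ` of `F[s][t]` to the twisted element `x^(S-π) w^(T-θ) a w^θ x^π`.
Multiplying the FA relations of `x` and `y` at `a` on both sides by powers of `x` and `w`, and
commuting powers past each other, shows that this linear map kills every multiple of
`f = ∑ cᵢ sⁱ` and of `g = ∑ dⱼ s^(M-j) t^j` whose support stays in the box.

In `F[s][t] / (f, g)` the class of `t` is integral over `F` (`g` is monic in `t` up to a unit
and `F[s]/(f)` is finite) and a unit (`t` divides `g(s, 0) = d₀ s^M`, and `s` is invertible
modulo `f` as `c₀ ≠ 0`). Hence its minimal polynomial `χ` has `χ(0) ≠ 0` and `χ(t) = P f + Q g`.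
With a box large enough for `P` and `Q`, the linear map sends `χ(t)` to
`x^S w^(T-D) (∑ χ_θ w^(D-θ) a w^θ) = 0`, and cancelling in the domain makes `χ` an FA
polynomial for `w` at `a`.
-/

/-- `x` is an element of finite adjoint action (FA-element) in the domain `R` over
the field `F`: `x` is nonzero (hence not a zero divisor in the domain `R`), and for
every `a ∈ R` there is a polynomial `f(t) = c₀ t^N + c₁ t^(N-1) + ⋯ + c_N` over `F`
with `c₀ ≠ 0`, `c_N ≠ 0` such that `c₀ x^N a + c₁ x^(N-1) a x + ⋯ + c_N a x^N = 0`. -/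
def IsFA (F : Type*) {R : Type*} [Field F] [Ring R] [Algebra F R] (x : R) : Prop :=
  x ≠ 0 ∧ ∀ a : R, ∃ (N : ℕ) (c : ℕ → F), c 0 ≠ 0 ∧ c N ≠ 0 ∧
    ∑ i ∈ Finset.range (N + 1), c i • (x ^ (N - i) * a * x ^ i) = 0

open Polynomial Finset

section QCommute

variable {F R : Type*} [CommSemiring F] [Semiring R] [Algebra F R] {γ : F}

theorem pow_mul_pow_of_mul_eq_smul {u v : R} (h : u * v = γ • (v * u)) (p q : ℕ) :
    u ^ p * v ^ q = γ ^ (p * q) • (v ^ q * u ^ p) := by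
  have hu : ∀ n : ℕ, u * v ^ n = γ ^ n • (v ^ n * u) := by
    intro n
    induction n with
    | zero => simp
    | succ n ih =>
      rw [pow_succ, ← mul_assoc, ih, smul_mul_assoc, mul_assoc, h, mul_smul_comm, smul_smul,
        pow_succ, mul_assoc]
  induction p with
  | zero => simp
  | succ p ih =>
    rw [pow_succ, mul_assoc, hu, mul_smul_comm, ← mul_assoc, ih, smul_mul_assoc, smul_smul,
      mul_assoc, ← pow_succ, ← pow_add, add_one_mul, add_comm]

variable {x y : R}

theorem mul_mul_eq_smul_mul_mul (h : x * y = γ • (y * x)) : x * (x * y) = γ • (x * y * x) := by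
  conv_lhs => rw [h, mul_smul_comm, ← mul_assoc]

theorem pow_mul_pow_eq_smul_mul_pow (h : x * y = γ • (y * x)) (k : ℕ) :
    x ^ k * y ^ k = γ ^ k.choose 2 • (x * y) ^ k := by
  induction k with
  | zero => simp
  | succ k ih =>
    have hxw := pow_mul_pow_of_mul_eq_smul (mul_mul_eq_smul_mul_mul h) 1 k
    rw [pow_one, one_mul] at hxw
    rw [pow_succ', pow_succ, mul_assoc, ← mul_assoc (x ^ k), ih, smul_mul_assoc, mul_smul_comm,
      ← mul_assoc, hxw, smul_mul_assoc, smul_smul, mul_assoc, ← pow_succ, ← pow_add,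
      Nat.choose_succ_succ', Nat.choose_one_right, add_comm]

theorem mul_pow_eq_smul_pow_mul_pow (h : x * y = γ • (y * x)) (k : ℕ) :
    (x * y) ^ k = γ ^ (k + 1).choose 2 • (y ^ k * x ^ k) := by
  induction k with
  | zero => simp
  | succ k ih =>
    have hxy := pow_mul_pow_of_mul_eq_smul h (k + 1) 1
    rw [pow_one, mul_one] at hxy
    rw [pow_succ, ih, smul_mul_assoc, mul_assoc, ← mul_assoc (x ^ k), ← pow_succ, hxy,
      mul_smul_comm, smul_smul, ← mul_assoc, ← pow_succ, ← pow_add, Nat.choose_succ_succ' (k + 1),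
      Nat.choose_one_right, add_comm]

end QCommute

section Sandwich

variable {F R : Type*}

/-- The twist `γ^(π T)` makes the relations inherited from `x` and from `y` have coefficients
independent of where they sit in the box `π ≤ S`, `θ ≤ T`. -/
def sandwich [CommSemiring F] [Semiring R] [Algebra F R] (γ : F) (x w a : R) (S T π θ : ℕ) : R :=
  γ ^ (π * T) • (x ^ (S - π) * w ^ (T - θ) * a * w ^ θ * x ^ π)

section Semiring

variable [CommSemiring F] [Semiring R] [Algebra F R] {γ : F} {x : R}

theorem sandwich_eq_smul_of_left_factor {w : R} (hxw : x * w = γ • (w * x)) (a : R)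
    (v u n i q p : ℕ) :
    sandwich γ x w a (v + (n + i) + p) (u + q) (p + i) q =
      γ ^ (p * (u + q) + (n + i) * u) • (x ^ v * w ^ u * (x ^ n * a * x ^ i) * w ^ q * x ^ p) := by
  rw [sandwich, show v + (n + i) + p - (p + i) = v + n by omega, Nat.add_sub_cancel, add_comm p i,
    pow_add, pow_add]
  simp only [mul_assoc]
  rw [← mul_assoc (x ^ n) (w ^ u), pow_mul_pow_of_mul_eq_smul hxw, ← mul_assoc (x ^ i) (w ^ q),
    pow_mul_pow_of_mul_eq_smul hxw]
  simp only [smul_mul_assoc, mul_smul_comm, smul_smul, mul_assoc, ← pow_add]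
  congr 2
  ring

theorem sum_sandwich_eq_zero_of_left_factor {w : R} (hxw : x * w = γ • (w * x)) {a : R} {N : ℕ}
    {c : ℕ → F} (hc : ∑ i ∈ range (N + 1), c i • (x ^ (N - i) * a * x ^ i) = 0) {S T p q : ℕ}
    (hp : p + N ≤ S) (hq : q ≤ T) :
    ∑ i ∈ range (N + 1), c i • sandwich γ x w a S T (p + i) q = 0 := by
  obtain ⟨v, rfl⟩ : ∃ v, S = v + N + p := ⟨S - (p + N), by omega⟩
  obtain ⟨u, rfl⟩ : ∃ u, T = u + q := ⟨T - q, by omega⟩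
  have hterm : ∀ i ∈ range (N + 1), sandwich γ x w a (v + N + p) (u + q) (p + i) q =
      γ ^ (p * (u + q) + N * u) • (x ^ v * w ^ u * (x ^ (N - i) * a * x ^ i) * w ^ q * x ^ p) := by
    intro i hi
    have hiN : N - i + i = N := Nat.sub_add_cancel (Nat.lt_succ_iff.mp (mem_range.mp hi))
    simpa only [hiN] using sandwich_eq_smul_of_left_factor hxw a v u (N - i) i q p
  rw [sum_congr rfl fun i hi => by rw [hterm i hi, smul_comm], ← smul_sum]
  have hfactor :
      ∑ i ∈ range (N + 1), c i • (x ^ v * w ^ u * (x ^ (N - i) * a * x ^ i) * w ^ q * x ^ p) =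
        x ^ v * w ^ u * (∑ i ∈ range (N + 1), c i • (x ^ (N - i) * a * x ^ i)) * w ^ q * x ^ p := by
    simp only [mul_sum, sum_mul, mul_smul_comm, smul_mul_assoc]
  rw [hfactor, hc]
  simp

theorem sum_eq_zero_of_sum_sandwich_zero [NoZeroDivisors R] {w : R} (hx : x ≠ 0) (hw : w ≠ 0)
    {a : R} {S T D : ℕ} (hDT : D ≤ T) {c : ℕ → F}
    (h : ∑ θ ∈ range (D + 1), c θ • sandwich γ x w a S T 0 θ = 0) :
    ∑ θ ∈ range (D + 1), c θ • (w ^ (D - θ) * a * w ^ θ) = 0 := by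
  have hfactor : ∑ θ ∈ range (D + 1), c θ • sandwich γ x w a S T 0 θ =
      x ^ S * w ^ (T - D) * ∑ θ ∈ range (D + 1), c θ • (w ^ (D - θ) * a * w ^ θ) := by
    rw [mul_sum]
    refine sum_congr rfl fun θ hθ => ?_
    have hθ : θ ≤ D := Nat.lt_succ_iff.mp (mem_range.mp hθ)
    rw [sandwich, mul_smul_comm, show T - θ = (T - D) + (D - θ) by omega, pow_add]
    simp [mul_assoc]
  rw [hfactor] at h
  exact (mul_eq_zero.mp h).resolve_left (mul_ne_zero (pow_ne_zero _ hx) (pow_ne_zero _ hw))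

end Semiring

variable [Field F] [Ring R] [Algebra F R] {γ : F} {x y : R}

theorem smul_sandwich_eq_smul_of_right_factor (hγ : γ ≠ 0) (h : x * y = γ • (y * x)) (a : R)
    (v u j k q p : ℕ) :
    γ ^ (j + k).choose 2 •
        sandwich γ x (x * y) a (v + (j + k) + p) (u + (j + k) + q) (p + k) (q + j) =
      γ ^ ((j + k) * (j + k) + p * (u + (j + k) + q) + (j + k) * u) •
        (x ^ v * (x * y) ^ u * x ^ (j + k) * (y ^ k * a * y ^ j) * x ^ (j + k) * (x * y) ^ q *
          x ^ p) := by
  have hxw := mul_mul_eq_smul_mul_mul h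
  have hmove : γ ^ ((j + 1).choose 2 + j * u) •
      (x ^ v * (x * y) ^ u * x ^ (j + k) * (y ^ k * a * y ^ j) * x ^ (j + k) * (x * y) ^ q *
        x ^ p) =
      γ ^ (k.choose 2 + k * q) •
        (x ^ (v + j) * (x * y) ^ (u + k) * a * (x * y) ^ (j + q) * x ^ (k + p)) := by
    rw [pow_add x j k, pow_add x v j, pow_add (x * y) u k, pow_add (x * y) j q, pow_add x k p]
    simp only [mul_assoc]
    rw [← mul_assoc (x ^ k) (y ^ k), pow_mul_pow_eq_smul_mul_pow h k,
      ← mul_assoc (x ^ k) ((x * y) ^ q), pow_mul_pow_of_mul_eq_smul hxw k q,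
      ← mul_assoc (x ^ j) ((x * y) ^ u), pow_mul_pow_of_mul_eq_smul hxw j u,
      mul_pow_eq_smul_pow_mul_pow h j]
    simp only [smul_mul_assoc, mul_smul_comm, smul_smul, mul_assoc, ← pow_add]
    congr 2
    ring
  refine smul_right_injective R (pow_ne_zero ((j + 1).choose 2 + j * u) hγ) ?_
  simp only
  conv_rhs => rw [smul_comm, hmove]
  rw [sandwich, smul_smul, smul_smul, smul_smul, ← pow_add, ← pow_add, ← pow_add,
    show v + (j + k) + p - (p + k) = v + j by omega,
    show u + (j + k) + q - (q + j) = u + k by omega, add_comm p k, add_comm q j]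
  congr 2
  -- the exponents agree because `(j + k).choose 2 = j.choose 2 + k.choose 2 + j * k`
  qify
  simp only [Nat.cast_choose_two]
  push_cast
  ring

theorem sum_sandwich_eq_zero_of_right_factor (hγ : γ ≠ 0) (h : x * y = γ • (y * x)) {a : R}
    {M : ℕ} {d : ℕ → F} (hd : ∑ j ∈ range (M + 1), d j • (y ^ (M - j) * a * y ^ j) = 0)
    {S T p q : ℕ} (hp : p + M ≤ S) (hq : q + M ≤ T) :
    ∑ j ∈ range (M + 1), d j • sandwich γ x (x * y) a S T (p + (M - j)) (q + j) = 0 := by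
  obtain ⟨v, rfl⟩ : ∃ v, S = v + M + p := ⟨S - (p + M), by omega⟩
  obtain ⟨u, rfl⟩ : ∃ u, T = u + M + q := ⟨T - (q + M), by omega⟩
  have hterm : ∀ j ∈ range (M + 1),
      γ ^ M.choose 2 • sandwich γ x (x * y) a (v + M + p) (u + M + q) (p + (M - j)) (q + j) =
        γ ^ (M * M + p * (u + M + q) + M * u) •
          (x ^ v * (x * y) ^ u * x ^ M * (y ^ (M - j) * a * y ^ j) * x ^ M * (x * y) ^ q *
            x ^ p) := by
    intro j hj
    obtain ⟨k, rfl⟩ : ∃ k, M = j + k := ⟨M - j, by have := mem_range.mp hj; omega⟩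
    rw [Nat.add_sub_cancel_left]
    exact smul_sandwich_eq_smul_of_right_factor hγ h a v u j k q p
  refine (smul_eq_zero.mp ?_).resolve_left (pow_ne_zero (M.choose 2) hγ)
  rw [smul_sum, sum_congr rfl fun j hj => by rw [smul_comm, hterm j hj, smul_comm], ← smul_sum]
  have hfactor : ∑ j ∈ range (M + 1), d j •
      (x ^ v * (x * y) ^ u * x ^ M * (y ^ (M - j) * a * y ^ j) * x ^ M * (x * y) ^ q * x ^ p) =
        x ^ v * (x * y) ^ u * x ^ M * (∑ j ∈ range (M + 1), d j • (y ^ (M - j) * a * y ^ j)) *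
          x ^ M * (x * y) ^ q * x ^ p := by
    simp only [mul_sum, sum_mul, mul_smul_comm, smul_mul_assoc]
  rw [hfactor, hd]
  simp

end Sandwich

section EvalMonomials

variable {F M : Type*} [CommSemiring F] [AddCommMonoid M] [Module F M]

noncomputable def evalMonomials (E : ℕ → ℕ → M) : F[X][X] →ₗ[F] M :=
  lsum fun θ => lsum fun π => LinearMap.toSpanSingleton F M (E π θ)

variable (E : ℕ → ℕ → M)

@[simp]
theorem evalMonomials_monomial (π θ : ℕ) (e : F) :
    evalMonomials E (monomial θ (monomial π e)) = e • E π θ := by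
  simp [evalMonomials]

theorem evalMonomials_map_C (χ : F[X]) :
    evalMonomials E (χ.map C) = ∑ θ ∈ range (χ.natDegree + 1), χ.coeff θ • E 0 θ := by
  conv_lhs => rw [χ.as_sum_range, Polynomial.map_sum]
  simp only [map_sum, Polynomial.map_monomial, ← monomial_zero_left, evalMonomials_monomial]

theorem evalMonomials_mul_eq_zero {h P : F[X][X]} {S T : ℕ}
    (hP : ∀ θ, (P.coeff θ).natDegree ≤ S) (hPT : P.natDegree ≤ T)
    (hE : ∀ π θ, π ≤ S → θ ≤ T → evalMonomials E (monomial θ (monomial π 1) * h) = 0) :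
    evalMonomials E (P * h) = 0 := by
  rw [P.as_sum_range, sum_mul, map_sum]
  refine sum_eq_zero fun θ hθ => ?_
  rw [(P.coeff θ).as_sum_range, map_sum, sum_mul, map_sum]
  refine sum_eq_zero fun π hπ => ?_
  rw [mem_range] at hθ hπ
  have hsmul : ∀ e : F, monomial θ (monomial π e) * h = e • (monomial θ (monomial π 1) * h) := by
    intro e
    rw [← smul_mul_assoc, smul_monomial, smul_monomial, smul_eq_mul, mul_one]
  rw [hsmul, map_smul, hE π θ (by have := hP θ; omega) (by omega), smul_zero]

theorem evalMonomials_monomial_mul_C_sum (p q N : ℕ) (c : ℕ → F) :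
    evalMonomials E (monomial q (monomial p 1) * C (∑ i ∈ range (N + 1), monomial i (c i))) =
      ∑ i ∈ range (N + 1), c i • E (p + i) q := by
  simp only [monomial_mul_C, mul_sum, monomial_mul_monomial, one_mul, map_sum,
    evalMonomials_monomial]

theorem evalMonomials_monomial_mul_sum (p q M : ℕ) (d : ℕ → F) :
    evalMonomials E (monomial q (monomial p 1) *
        ∑ j ∈ range (M + 1), monomial j (monomial (M - j) (d j))) =
      ∑ j ∈ range (M + 1), d j • E (p + (M - j)) (q + j) := by
  simp only [mul_sum, monomial_mul_monomial, one_mul, map_sum, evalMonomials_monomial]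

end EvalMonomials

theorem minpoly.coeff_zero_ne_zero_of_isUnit {F B : Type*} [Field F] [Ring B] [Algebra F B] {z : B}
    (hz : IsIntegral F z) (hu : IsUnit z) : (minpoly F z).coeff 0 ≠ 0 := by
  intro h0
  obtain ⟨p, hp⟩ := X_dvd_iff.mpr h0
  have hpm : p.Monic := monic_X.of_mul_monic_left (hp ▸ minpoly.monic hz)
  have hpz : Polynomial.aeval z p = 0 := by
    have := minpoly.aeval F z
    rwa [hp, map_mul, aeval_X, hu.mul_right_eq_zero] at this
  have := minpoly.min F z hpm hpz
  rw [hp, degree_mul, degree_X, degree_eq_natDegree hpm.ne_zero] at this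
  norm_cast at this
  omega

namespace Polynomial

theorem exists_natDegree_coeff_le {R : Type*} [Semiring R] (P : R[X][X]) :
    ∃ S, ∀ θ, (P.coeff θ).natDegree ≤ S :=
  ⟨P.support.sup fun θ => (P.coeff θ).natDegree, fun θ => by
    by_cases hθ : θ ∈ P.support
    · exact le_sup (f := fun θ => (P.coeff θ).natDegree) hθ
    · simp [notMem_support_iff.mp hθ]⟩

section Quotient

variable {R A : Type*} [CommRing R] [CommRing A] [Algebra R A] {I : Ideal A[X]}

theorem aeval_mk_X (p : R[X]) :
    aeval (Ideal.Quotient.mk I X) p = Ideal.Quotient.mk I (p.map (algebraMap R A)) := by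
  rw [← Ideal.Quotient.mkₐ_eq_mk R, aeval_algHom_apply, ← aeval_map_algebraMap A (X : A[X]) p,
    aeval_X_left_apply]

theorem isIntegral_mk_X_of_monic {g : A[X]} (hg : g.Monic) (hgI : g ∈ I)
    (hcoeff : ∀ n, IsIntegral R (Ideal.Quotient.mk I (C (g.coeff n)))) :
    IsIntegral R (Ideal.Quotient.mk I X) := by
  cases subsingleton_or_nontrivial (A[X] ⧸ I) with
  | inl _ => exact ⟨X, monic_X, Subsingleton.elim _ _⟩
  | inr _ =>
    have hdeg : g.natDegree ≠ 0 := fun h => by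
      rw [hg.natDegree_eq_zero] at h
      have : Ideal.Quotient.mk I g = 0 := Ideal.Quotient.eq_zero_iff_mem.mpr hgI
      rw [h, map_one] at this
      exact one_ne_zero this
    refine .of_aeval_monic_of_isIntegral_coeff (hg.map ((Ideal.Quotient.mk I).comp C))
      (by rwa [hg.natDegree_map]) ?_ fun n => ?_
    · rw [eval_map, ← hom_eval₂, eval₂_C_X, Ideal.Quotient.eq_zero_iff_mem.mpr hgI]
      exact isIntegral_zero
    · rw [coeff_map]
      exact hcoeff n

theorem isUnit_mk_X {g : A[X]} (hgI : g ∈ I) (hg0 : IsUnit (Ideal.Quotient.mk I (C (g.coeff 0)))) :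
    IsUnit (Ideal.Quotient.mk I X) := by
  have h : Ideal.Quotient.mk I X * Ideal.Quotient.mk I g.divX =
      -Ideal.Quotient.mk I (C (g.coeff 0)) := by
    rw [eq_neg_iff_add_eq_zero, ← map_mul, ← map_add, X_mul_divX_add]
    exact Ideal.Quotient.eq_zero_iff_mem.mpr hgI
  exact isUnit_of_mul_isUnit_left (h ▸ hg0.neg)

end Quotient

variable {F : Type*} [Field F]

theorem exists_monic_map_C_mem {I : Ideal F[X][X]} {f : F[X]} {g : F[X][X]} (hf : f ≠ 0)
    (hg : g.Monic) (hcop : IsCoprime f (g.coeff 0)) (hfI : C f ∈ I) (hgI : g ∈ I) :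
    ∃ χ : F[X], χ.Monic ∧ χ.coeff 0 ≠ 0 ∧ χ.map C ∈ I := by
  have hmk : ∀ q : F[X], Ideal.Quotient.mk I (C q) = aeval (Ideal.Quotient.mk I (C X)) q := by
    intro q
    rw [← Ideal.Quotient.mkₐ_eq_mk F, aeval_algHom_apply, ← algebraMap_eq, aeval_algebraMap_apply,
      aeval_X_left_apply]
  have hs : IsIntegral F (Ideal.Quotient.mk I (C X)) := by
    refine IsAlgebraic.isIntegral ⟨f, hf, ?_⟩
    rw [← hmk]
    exact Ideal.Quotient.eq_zero_iff_mem.mpr hfI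
  have ht : IsIntegral F (Ideal.Quotient.mk I X) := by
    refine isIntegral_mk_X_of_monic hg hgI fun n => ?_
    rw [hmk]
    exact adjoin_le_integralClosure hs (aeval_mem_adjoin_singleton F _)
  have hu : IsUnit (Ideal.Quotient.mk I X) := by
    obtain ⟨u, v, huv⟩ := hcop
    refine isUnit_mk_X hgI (IsUnit.of_mul_eq_one_right (Ideal.Quotient.mk I (C v)) ?_)
    rw [← map_mul, ← C_mul, ← map_one (Ideal.Quotient.mk I), Ideal.Quotient.eq, ← C_1, ← huv]
    convert I.neg_mem (I.mul_mem_left (C u) hfI) using 1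
    simp only [C_add, C_mul]
    ring
  refine ⟨minpoly F (Ideal.Quotient.mk I X), minpoly.monic ht,
    minpoly.coeff_zero_ne_zero_of_isUnit ht hu, ?_⟩
  rw [← Ideal.Quotient.eq_zero_iff_mem, ← algebraMap_eq, ← aeval_mk_X]
  exact minpoly.aeval F _

theorem exists_monic_map_C_eq_mul_add_mul (N M : ℕ) (c d : ℕ → F)
    (hc0 : c 0 ≠ 0) (hd0 : d 0 ≠ 0) (hdM : d M ≠ 0) :
    ∃ χ : F[X], χ.Monic ∧ χ.coeff 0 ≠ 0 ∧ ∃ P Q : F[X][X],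
      χ.map C = P * C (∑ i ∈ range (N + 1), monomial i (c i)) +
        Q * ∑ j ∈ range (M + 1), monomial j (monomial (M - j) (d j)) := by
  set f : F[X] := ∑ i ∈ range (N + 1), monomial i (c i)
  set g : F[X][X] := ∑ j ∈ range (M + 1), monomial j (monomial (M - j) (d j))
  have hf0 : f.coeff 0 = c 0 := by simp [f, coeff_monomial]
  have hg0 : g.coeff 0 = C (d 0) * X ^ M := by
    simp [g, coeff_monomial, C_mul_X_pow_eq_monomial]
  have hgM : g.coeff M = C (d M) := by simp [g, coeff_monomial]
  have hgdeg : g.natDegree ≤ M :=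
    natDegree_sum_le_of_forall_le _ _ fun j hj =>
      (natDegree_monomial_le _).trans (Nat.lt_succ_iff.mp (mem_range.mp hj))
  have hmonic : (C (C (d M)⁻¹) * g).Monic :=
    monic_of_natDegree_le_of_coeff_eq_one M ((natDegree_C_mul_le _ _).trans hgdeg)
      (by rw [coeff_C_mul, hgM, ← C_mul, inv_mul_cancel₀ hdM, C_1])
  have hcop : IsCoprime f ((C (C (d M)⁻¹) * g).coeff 0) := by
    have hX : IsCoprime f X :=
      (irreducible_X.coprime_iff_not_dvd.mpr (by rw [X_dvd_iff, hf0]; exact hc0)).symm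
    rw [coeff_C_mul, hg0, ← mul_assoc, ← C_mul]
    have hunit : IsUnit (C ((d M)⁻¹ * d 0)) :=
      isUnit_C.mpr (mul_ne_zero (inv_ne_zero hdM) hd0).isUnit
    exact (isCoprime_mul_unit_left_right hunit _ _).mpr hX.pow_right
  obtain ⟨χ, hχ, hχ0, hmem⟩ := exists_monic_map_C_mem (I := Ideal.span {C f, g})
    (fun h => hc0 (by rw [← hf0, h, coeff_zero])) hmonic hcop (Ideal.subset_span (by simp))
    (Ideal.mul_mem_left _ _ (Ideal.subset_span (by simp)))
  obtain ⟨P, Q, hPQ⟩ := Ideal.mem_span_pair.mp hmem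
  exact ⟨χ, hχ, hχ0, P, Q, hPQ.symm⟩

end Polynomial

/-- If `x`, `y` are FA-elements of a domain `R` over a field `F` and `x y = γ y x`
for some nonzero `γ ∈ F`, then `x y` is also an FA-element. -/
theorem isFA_mul_of_qCommute {F R : Type*} [Field F] [Ring R] [IsDomain R] [Algebra F R]
    (x y : R) (γ : F) (hγ : γ ≠ 0) (hxy : x * y = γ • (y * x))
    (hx : IsFA F x) (hy : IsFA F y) : IsFA F (x * y) := by
  obtain ⟨hx0, hxa⟩ := hx
  obtain ⟨hy0, hya⟩ := hy
  refine ⟨mul_ne_zero hx0 hy0, fun a => ?_⟩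
  obtain ⟨N, c, hc0, -, hc⟩ := hxa a
  obtain ⟨M, d, hd0, hdM, hd⟩ := hya a
  obtain ⟨χ, hχ, hχ0, P, Q, hPQ⟩ := exists_monic_map_C_eq_mul_add_mul N M c d hc0 hd0 hdM
  obtain ⟨SP, hSP⟩ := exists_natDegree_coeff_le P
  obtain ⟨SQ, hSQ⟩ := exists_natDegree_coeff_le Q
  set S := SP + SQ + N + M
  set T := P.natDegree + Q.natDegree + M + χ.natDegree
  have hχE : evalMonomials (sandwich γ x (x * y) a S T) (χ.map C) = 0 := by
    rw [hPQ, map_add,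
      evalMonomials_mul_eq_zero _ hSP le_rfl fun π θ hπ hθ => by
        rw [evalMonomials_monomial_mul_C_sum]
        exact sum_sandwich_eq_zero_of_left_factor (mul_mul_eq_smul_mul_mul hxy) hc (by omega)
          (by omega),
      evalMonomials_mul_eq_zero _ hSQ le_rfl fun π θ hπ hθ => by
        rw [evalMonomials_monomial_mul_sum]
        exact sum_sandwich_eq_zero_of_right_factor hγ hxy hd (by omega) (by omega),
      add_zero]
  rw [evalMonomials_map_C] at hχE
  refine ⟨χ.natDegree, χ.coeff, hχ0, by rw [coeff_natDegree, hχ]; exact one_ne_zero, ?_⟩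
  exact sum_eq_zero_of_sum_sandwich_zero hx0 (mul_ne_zero hx0 hy0) le_add_self hχE
end

section
/- Let R be a domain over a field F generated as an F-algebra by x₁, …, xₙ, and let x be an element of R that is not a zero divisor. Suppose that for every j there exists a polynomial f_j(t) = c₀tᴺ + ⋯ + c_N over F with c₀, c_N ≠ 0 such that c₀xᴺx_j + c₁xᴺ⁻¹x_j x + ⋯ + c_N x_j xᴺ = 0. Then x is an FA-element of R, i.e., the analogous polynomial identity holds for every element a of R. -/
open Finset Submodule

-- `f(Ad_x)(a) = 0` for some `f` with `f(0) ≠ 0`, cleared of the denominator `x^N`.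
def IsAdAlgebraic (F : Type*) {R : Type*} [Field F] [Ring R] [Algebra F R] (x a : R) : Prop :=
  ∃ (N : ℕ) (c : ℕ → F), c 0 ≠ 0 ∧ c N ≠ 0 ∧
    ∑ i ∈ range (N + 1), c i • (x ^ (N - i) * a * x ^ i) = 0

section

variable {F R : Type*} [Field F] [Ring R] [Algebra F R] {x a b : R}

theorem pow_mul_mul_pow_mem_span {N : ℕ} {c : ℕ → F} (hc0 : c 0 ≠ 0)
    (hrel : ∑ i ∈ range (N + 1), c i • (x ^ (N - i) * a * x ^ i) = 0) (i j : ℕ) :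
    x ^ i * a * x ^ j ∈
      span F {w | ∃ k l, k < N ∧ k + l = i + j ∧ x ^ k * a * x ^ l = w} := by
  induction i using Nat.strong_induction_on generalizing j with
  | _ i ih =>
  by_cases hi : i < N
  · exact subset_span ⟨i, j, hi, rfl, rfl⟩
  obtain ⟨i, rfl⟩ := Nat.exists_eq_add_of_le (not_lt.1 hi)
  have hword : ∀ p q, x ^ i * (x ^ p * a * x ^ q) * x ^ j = x ^ (i + p) * a * x ^ (q + j) := by
    intro p q
    simp only [pow_add, mul_assoc]
  have hshift := congrArg (x ^ i * · * x ^ j) hrel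
  simp only [sum_range_succ', mul_add, add_mul, mul_sum, sum_mul, mul_smul_comm, smul_mul_assoc,
    hword, mul_zero, zero_mul] at hshift
  rw [Nat.sub_zero, zero_add, add_comm i N] at hshift
  rw [← smul_mem_iff _ hc0, eq_neg_of_add_eq_zero_right hshift]
  refine neg_mem (sum_mem fun k hk => smul_mem _ _ ?_)
  have hk : k < N := mem_range.1 hk
  have := ih (i + (N - (k + 1))) (by omega) (k + 1 + j)
  rwa [show i + (N - (k + 1)) + (k + 1 + j) = N + i + j by omega] at this

theorem IsAdAlgebraic.of_sum_eq_zero (hx : IsRegular x) {m : ℕ} {g : ℕ → F}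
    (hg : ∃ k ≤ m, g k ≠ 0)
    (hsum : ∑ k ∈ range (m + 1), g k • (x ^ (m - k) * a * x ^ k) = 0) :
    IsAdAlgebraic F x a := by
  induction m generalizing g with
  | zero =>
    obtain ⟨k, hk, hgk⟩ := hg
    obtain rfl : k = 0 := by omega
    exact ⟨0, g, hgk, hgk, hsum⟩
  | succ m ih =>
    by_cases hg0 : g 0 = 0
    · refine ih (g := fun k => g (k + 1)) ?_ ?_
      · obtain ⟨_ | k, hk, hgk⟩ := hg
        · exact absurd hg0 hgk
        · exact ⟨k, by omega, hgk⟩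
      · rw [sum_range_succ', hg0, zero_smul, add_zero] at hsum
        rw [← hx.right.mul_right_eq_zero_iff, ← hsum, sum_mul]
        refine sum_congr rfl fun k _ => ?_
        simp only [smul_mul_assoc, pow_succ, mul_assoc, Nat.add_sub_add_right]
    by_cases hgm : g (m + 1) = 0
    · refine ih (g := g) ?_ ?_
      · obtain ⟨k, hk, hgk⟩ := hg
        exact ⟨k, by grind, hgk⟩
      · rw [sum_range_succ, hgm, zero_smul, add_zero] at hsum
        rw [← hx.left.mul_left_eq_zero_iff, ← hsum, mul_sum]
        refine sum_congr rfl fun k hk => ?_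
        rw [show m + 1 - k = m - k + 1 by have := mem_range.1 hk; omega]
        simp only [mul_smul_comm, pow_succ', mul_assoc]
    exact ⟨m + 1, g, hg0, hgm, hsum⟩

theorem IsAdAlgebraic.of_forall_mem_span (hx : IsRegular x) {m : ℕ} (G : Finset R)
    (hG : #G ≤ m) (hmem : ∀ k ≤ m, x ^ (m - k) * a * x ^ k ∈ span F (G : Set R)) :
    IsAdAlgebraic F x a := by
  have hdep : ¬ LinearIndepOn F (fun k => x ^ (m - k) * a * x ^ k) (range (m + 1) : Set ℕ) := by
    intro hli
    have hcard := linearIndependent_iff_card_le_finrank_span.mp hli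
    have := hcard.trans <|
      (finrank_mono (span_le.2 ?_)).trans ((finrank_span_finset_le_card G).trans hG)
    · simp at this
    · rintro _ ⟨⟨k, hk⟩, rfl⟩
      exact hmem k (by simpa [Nat.lt_succ_iff] using hk)
  obtain ⟨g, hsum, k, hk, hgk⟩ := not_linearIndepOn_finset_iff.mp hdep
  exact .of_sum_eq_zero hx ⟨k, Nat.lt_succ_iff.1 (mem_range.1 hk), hgk⟩ hsum

theorem IsAdAlgebraic.add (hx : IsRegular x) (ha : IsAdAlgebraic F x a)
    (hb : IsAdAlgebraic F x b) : IsAdAlgebraic F x (a + b) := by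
  classical
  obtain ⟨N, c, hc0, -, hca⟩ := ha
  obtain ⟨M, d, hd0, -, hdb⟩ := hb
  let words (y : R) (K : ℕ) : Finset R := (range K).image fun k => x ^ k * y * x ^ (N + M - k)
  have hsub (y : R) (K : ℕ) :
      {w | ∃ k l, k < K ∧ k + l = N + M ∧ x ^ k * y * x ^ l = w} ⊆ (words y K : Set R) := by
    rintro _ ⟨k, l, hk, hkl, rfl⟩
    exact mem_image.2 ⟨k, mem_range.2 hk, by rw [← hkl, Nat.add_sub_cancel_left]⟩
  refine .of_forall_mem_span (m := N + M) hx (words a N ∪ words b M)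
    ((card_union_le _ _).trans (add_le_add (card_image_le.trans_eq (card_range N))
      (card_image_le.trans_eq (card_range M)))) fun k hk => ?_
  rw [mul_add, add_mul, coe_union]
  refine add_mem (span_mono (Set.subset_union_left.trans' (hsub a N)) ?_)
    (span_mono (Set.subset_union_right.trans' (hsub b M)) ?_)
  · simpa [Nat.sub_add_cancel hk] using pow_mul_mul_pow_mem_span hc0 hca (N + M - k) k
  · simpa [Nat.sub_add_cancel hk] using pow_mul_mul_pow_mem_span hd0 hdb (N + M - k) k

theorem IsAdAlgebraic.mul (hx : IsRegular x) (ha : IsAdAlgebraic F x a)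
    (hb : IsAdAlgebraic F x b) : IsAdAlgebraic F x (a * b) := by
  classical
  obtain ⟨N, c, hc0, -, hca⟩ := ha
  obtain ⟨M, d, hd0, -, hdb⟩ := hb
  let G : Finset R := (range N ×ˢ range M).image
    fun kl => x ^ kl.1 * a * x ^ kl.2 * b * x ^ (N * M - kl.1 - kl.2)
  refine .of_forall_mem_span (m := N * M) hx G (card_image_le.trans_eq (by simp))
    fun k hk => ?_
  -- Reduce the left exponent of `a`; the middle power of `x` then joins `b`, whose left
  -- exponent is reduced in turn.
  have hsplit_a : x ^ (N * M - k) * (a * b) * x ^ k =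
      LinearMap.mulRight F (b * x ^ k) (x ^ (N * M - k) * a * x ^ 0) := by
    simp [mul_assoc]
  rw [hsplit_a]
  refine (map_span_le _ _ _).2 ?_ (mem_map_of_mem (pow_mul_mul_pow_mem_span hc0 hca _ 0))
  rintro _ ⟨p, q, hp, hpq, rfl⟩
  have hsplit_b : LinearMap.mulRight F (b * x ^ k) (x ^ p * a * x ^ q) =
      LinearMap.mulLeft F (x ^ p * a) (x ^ q * b * x ^ k) := by
    simp [mul_assoc]
  rw [hsplit_b]
  refine (map_span_le _ _ _).2 ?_ (mem_map_of_mem (pow_mul_mul_pow_mem_span hd0 hdb q k))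
  rintro _ ⟨r, s, hr, hrs, rfl⟩
  refine subset_span <|
    mem_image.2 ⟨(p, r), mem_product.2 ⟨mem_range.2 hp, mem_range.2 hr⟩, ?_⟩
  rw [show N * M - p - r = s by omega]
  simp [mul_assoc]

theorem isAdAlgebraic_algebraMap (x : R) (r : F) : IsAdAlgebraic F x (algebraMap F R r) :=
  ⟨1, fun i => if i = 0 then 1 else -1, by simp, by simp, by
    simp [sum_range_succ, Algebra.commutes]⟩

variable (F) in
def adAlgebraicSubalgebra (hx : IsRegular x) : Subalgebra F R where
  carrier := {a | IsAdAlgebraic F x a}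
  mul_mem' := IsAdAlgebraic.mul hx
  add_mem' := IsAdAlgebraic.add hx
  algebraMap_mem' := isAdAlgebraic_algebraMap x

end

/-- If `R` is a domain over `F` generated as an `F`-algebra by `x₁, …, xₙ`, `x` is a
nonzero element (hence not a zero divisor), and for every generator `xⱼ` there is a
polynomial `f_j(t) = c₀ t^N + ⋯ + c_N` over `F` with `c₀, c_N ≠ 0` satisfying
`c₀ x^N xⱼ + c₁ x^(N-1) xⱼ x + ⋯ + c_N xⱼ x^N = 0`, then `x` is an FA-element of `R`. -/
theorem isFA_of_generators {F R : Type*} [Field F] [Ring R] [IsDomain R] [Algebra F R]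
    (n : ℕ) (xs : Fin n → R) (hgen : Algebra.adjoin F (Set.range xs) = ⊤)
    (x : R) (hx : x ≠ 0)
    (h : ∀ j : Fin n, ∃ (N : ℕ) (c : ℕ → F), c 0 ≠ 0 ∧ c N ≠ 0 ∧
      ∑ i ∈ Finset.range (N + 1), c i • (x ^ (N - i) * xs j * x ^ i) = 0) :
    IsFA F x := by
  refine ⟨hx, fun a => ?_⟩
  have hle :
      Algebra.adjoin F (Set.range xs) ≤ adAlgebraicSubalgebra F (IsRegular.of_ne_zero' hx) :=
    Algebra.adjoin_le (Set.range_subset_iff.2 h)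
  exact hle (hgen ▸ Algebra.mem_top)
end

section
/- Let R be a domain over a field F with automorphism τ and τ-derivation δ satisfying τδ = γδτ, γ ≠ 0, and let T = R[x; τ, δ]. Suppose a ∈ R is a τ-eigenvector with τ(a) = βa and there exists a polynomial f(t) = c₀tᴺ + ⋯ + c_N over F, c₀ ≠ 0, c_N ≠ 0, with c₀xᴺa + c₁xᴺ⁻¹ax + ⋯ + c_N a xᴺ = 0. Then f(β) = 0 and δᴺ(a) = 0, where N = deg f. -/
/-!
Right multiplication by `x` moves past `R` as `φ b * x = x * φ (τ⁻¹ b) - φ (δ (τ⁻¹ b))`, so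
with `σ = τ⁻¹` the element `φ a * xⁱ` is `Σ xˡ φ (Pₗ a)`, where the `Pₗ` are the coefficients of
`(Xσ - δσ)ⁱ` in the polynomial ring over `End_F R`. Hence the relation says that the coefficients
of `Q = Σ cᵢ X^(N-i) (Xσ - δσ)ⁱ`, applied to `a`, all vanish. The top coefficient of `Q` is
`Σ cᵢ σⁱ`, which sends `a` to `β^(-N) f(β) a`. The constant coefficient is `c_N (-δσ)^N`, and since
each `δʲ a` is a `τ`-eigenvector with eigenvalue `γʲ β`, it sends `a` to a nonzero multiple
of `δ^N a`.
-/

open Polynomial Finset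

section HomogeneousEval

variable {F A : Type*} [CommSemiring F] [Semiring A] [Algebra F A]

noncomputable def homogeneousEval (c : ℕ → F) (N : ℕ) (p : A[X]) : A[X] :=
  ∑ i ∈ range (N + 1), c i • (X ^ (N - i) * p ^ i)

variable (c : ℕ → F) (N : ℕ) {p : A[X]}

theorem natDegree_homogeneousEval_le (hp : p.natDegree ≤ 1) :
    (homogeneousEval c N p).natDegree ≤ N := by
  refine natDegree_sum_le_of_forall_le _ _ fun i hi => (natDegree_smul_le _ _).trans ?_
  have hiN : i ≤ N := Nat.lt_succ_iff.mp (mem_range.mp hi)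
  calc (X ^ (N - i) * p ^ i).natDegree ≤ (N - i) + i * 1 :=
        natDegree_mul_le_of_le (natDegree_X_pow_le _) (natDegree_pow_le_of_le i hp)
    _ = N := by omega

theorem coeff_homogeneousEval_self (hp : p.natDegree ≤ 1) :
    (homogeneousEval c N p).coeff N = ∑ i ∈ range (N + 1), c i • p.coeff 1 ^ i := by
  simp only [homogeneousEval, finsetSum_coeff, coeff_smul]
  refine sum_congr rfl fun i hi => ?_
  have hiN : i ≤ N := Nat.lt_succ_iff.mp (mem_range.mp hi)
  rw [coeff_X_pow_mul', if_pos (Nat.sub_le N i), Nat.sub_sub_self hiN,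
    ← coeff_pow_of_natDegree_le hp, mul_one]

theorem coeff_zero_homogeneousEval :
    (homogeneousEval c N p).coeff 0 = c N • p.coeff 0 ^ N := by
  simp only [homogeneousEval, finsetSum_coeff, coeff_smul, coeff_X_pow_mul', nonpos_iff_eq_zero]
  rw [sum_eq_single N (fun i hi hiN => ?_) (by simp), if_pos (Nat.sub_self N), Nat.sub_self]
  · exact congrArg (c N • ·) (map_pow constantCoeff p N)
  · rw [if_neg (by have := mem_range.mp hi; omega), smul_zero]

end HomogeneousEval

namespace OreExtension

variable {F R T : Type*} [CommRing F] [Ring R] [Algebra F R] [Ring T] [Algebra F T]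
  (φ : R →ₐ[F] T) (x : T)

/-- Reads `Σ Xˡ fₗ`, with coefficients in `End_F R`, as `Σ xˡ φ (fₗ b)`. -/
noncomputable def opEval (b : R) : (Module.End F R)[X] →ₗ[F] T :=
  lsum fun l => LinearMap.mulLeft F (x ^ l) ∘ₗ φ.toLinearMap ∘ₗ LinearMap.applyₗ b

variable {φ x}

theorem opEval_monomial (b : R) (l : ℕ) (f : Module.End F R) :
    opEval φ x b (monomial l f) = x ^ l * φ (f b) := by
  simp [opEval]

theorem opEval_eq_sum_range (b : R) {p : (Module.End F R)[X]} {n : ℕ} (hp : p.natDegree < n) :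
    opEval φ x b p = ∑ i ∈ range n, x ^ i * φ (p.coeff i b) := by
  rw [opEval, lsum_apply, sum_over_range' _ (by simp) n hp]
  rfl

theorem opEval_X_pow_mul (b : R) (m : ℕ) (p : (Module.End F R)[X]) :
    opEval φ x b (X ^ m * p) = x ^ m * opEval φ x b p := by
  induction p using Polynomial.induction_on' with
  | add p q hp hq => rw [mul_add, map_add, hp, hq, map_add, mul_add]
  | monomial l f => rw [X_pow_mul_monomial, opEval_monomial, opEval_monomial, pow_add,
      (Commute.pow_pow_self x l m).eq, mul_assoc]

section RightMul

variable {σ ρ : Module.End F R} (hx : ∀ b, φ b * x = x * φ (σ b) + φ (ρ b))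
include hx

theorem opEval_mul_x (b : R) (p : (Module.End F R)[X]) :
    opEval φ x b p * x = opEval φ x b ((C σ * X + C ρ) * p) := by
  induction p using Polynomial.induction_on' with
  | add p q hp hq => rw [map_add, add_mul, hp, hq, mul_add, map_add]
  | monomial l f =>
    rw [opEval_monomial, mul_assoc, hx, mul_add, ← mul_assoc, ← pow_succ, add_mul, mul_assoc,
      X_mul_monomial, C_mul_monomial, C_mul_monomial, map_add, opEval_monomial, opEval_monomial]
    rfl

theorem map_mul_x_pow (b : R) (k : ℕ) :
    φ b * x ^ k = opEval φ x b ((C σ * X + C ρ) ^ k) := by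
  induction k with
  | zero => rw [pow_zero, pow_zero, mul_one, ← monomial_zero_one, opEval_monomial, pow_zero,
      one_mul]; rfl
  | succ k ih => rw [pow_succ, ← mul_assoc, ih, opEval_mul_x hx, ← pow_succ']

theorem opEval_homogeneousEval (b : R) (c : ℕ → F) (N : ℕ) :
    opEval φ x b (homogeneousEval c N (C σ * X + C ρ)) =
      ∑ i ∈ range (N + 1), c i • (x ^ (N - i) * φ b * x ^ i) := by
  rw [homogeneousEval, map_sum]
  refine sum_congr rfl fun i _ => ?_
  rw [map_smul, opEval_X_pow_mul, ← map_mul_x_pow hx, mul_assoc]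

end RightMul

theorem map_mul_x (τ : R ≃ₐ[F] R) (δ : Module.End F R)
    (hOre : ∀ a : R, x * φ a = φ (τ a) * x + φ (δ a)) (b : R) :
    φ b * x = x * φ (τ.symm.toLinearMap b) + φ ((-(δ * τ.symm.toLinearMap)) b) := by
  simp [hOre]

theorem coeff_apply_eq_zero_of_opEval_eq_zero
    (hbasis : ∀ (m : ℕ) (r : ℕ → R), ∑ i ∈ range m, x ^ i * φ (r i) = 0 → ∀ i < m, r i = 0)
    {b : R} {p : (Module.End F R)[X]} {n : ℕ} (hp : p.natDegree < n) (h : opEval φ x b p = 0) :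
    ∀ i < n, p.coeff i b = 0 :=
  hbasis n (fun i => p.coeff i b) (by rw [← opEval_eq_sum_range b hp, h])

end OreExtension

section Eigenvectors

variable {F R : Type*} [Field F] [Ring R] [Algebra F R]

theorem AlgEquiv.symm_apply_eq_inv_smul (e : R ≃ₐ[F] R) {v : R} {μ : F} (hμ : μ ≠ 0)
    (h : e v = μ • v) : e.symm v = μ⁻¹ • v := by
  rw [e.symm_apply_eq, map_smul, h, smul_smul, inv_mul_cancel₀ hμ, one_smul]

theorem apply_pow_apply_eq_smul {τ : R → R} {δ : Module.End F R} {γ β : F} {a : R}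
    (hτδ : ∀ b, τ (δ b) = γ • δ (τ b)) (hτa : τ a = β • a) (j : ℕ) :
    τ ((δ ^ j) a) = (γ ^ j * β) • (δ ^ j) a := by
  induction j with
  | zero => simpa using hτa
  | succ j ih => rw [pow_succ', Module.End.mul_apply, hτδ, ih, map_smul, smul_smul, pow_succ,
      mul_right_comm, mul_comm γ]

theorem neg_mul_symm_pow_apply {τ : R ≃ₐ[F] R} {δ : Module.End F R} {γ β : F} (hγ : γ ≠ 0)
    (hβ : β ≠ 0) (hτδ : ∀ b, τ (δ b) = γ • δ (τ b)) {a : R} (hτa : τ a = β • a) (j : ℕ) :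
    ((-(δ * τ.symm.toLinearMap)) ^ j) a = (∏ i ∈ range j, -(γ ^ i * β)⁻¹) • (δ ^ j) a := by
  induction j with
  | zero => simp
  | succ j ih =>
    have hσ := τ.symm_apply_eq_inv_smul (mul_ne_zero (pow_ne_zero j hγ) hβ)
      (apply_pow_apply_eq_smul hτδ hτa j)
    rw [pow_succ', Module.End.mul_apply, ih, map_smul, LinearMap.neg_apply, Module.End.mul_apply,
      AlgEquiv.toLinearMap_apply, hσ, map_smul, prod_range_succ, smul_neg, ← neg_smul,
      smul_smul, ← Module.End.mul_apply, ← pow_succ', neg_mul, mul_neg]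

end Eigenvectors

theorem sum_mul_pow_sub_eq_pow_mul_sum_mul_inv_pow {F : Type*} [Field F] {β : F} (hβ : β ≠ 0)
    (c : ℕ → F) (N : ℕ) :
    ∑ i ∈ range (N + 1), c i * β ^ (N - i) = β ^ N * ∑ i ∈ range (N + 1), c i * β⁻¹ ^ i := by
  rw [mul_sum]
  refine sum_congr rfl fun i hi => ?_
  rw [pow_sub₀ β hβ (Nat.lt_succ_iff.mp (mem_range.mp hi)), inv_pow]
  ring

theorem ore_eigenvalue_root_and_nilpotent_general {F R T : Type*} [Field F] [Ring R]
    [Algebra F R] [Ring T] [Algebra F T]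
    (τ : R ≃ₐ[F] R) (δ : Module.End F R)
    (γ : F) (hγ : γ ≠ 0) (hτδ : ∀ a : R, τ (δ a) = γ • δ (τ a))
    (φ : R →ₐ[F] T) (x : T)
    (hOre : ∀ a : R, x * φ a = φ (τ a) * x + φ (δ a))
    (hbasis : ∀ (m : ℕ) (r : ℕ → R),
      ∑ i ∈ Finset.range m, x ^ i * φ (r i) = 0 → ∀ i < m, r i = 0)
    (a : R) (ha : a ≠ 0) (β : F) (hτa : τ a = β • a)
    (N : ℕ) (c : ℕ → F) (hcN : c N ≠ 0)
    (hrel : ∑ i ∈ Finset.range (N + 1), c i • (x ^ (N - i) * φ a * x ^ i) = 0) :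
    (∑ i ∈ Finset.range (N + 1), c i * β ^ (N - i)) = 0 ∧ (δ ^ N) a = 0 := by
  have hβ : β ≠ 0 := by
    rintro rfl
    exact ha (τ.injective (by rw [hτa, zero_smul, map_zero]))
  have hcoeff := OreExtension.coeff_apply_eq_zero_of_opEval_eq_zero hbasis
    (Nat.lt_succ_of_le (natDegree_homogeneousEval_le c N natDegree_linear_le))
    ((OreExtension.opEval_homogeneousEval (OreExtension.map_mul_x τ δ hOre) a c N).trans hrel)
  constructor
  · have htop := hcoeff N N.lt_succ_self
    have hσa : τ.symm.toLinearMap a = β⁻¹ • a := τ.symm_apply_eq_inv_smul hβ hτa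
    simp only [coeff_homogeneousEval_self c N natDegree_linear_le, LinearMap.sum_apply,
      LinearMap.smul_apply, smul_smul, ← sum_smul,
      (Module.End.hasEigenvector_iff.mpr ⟨Module.End.mem_eigenspace_iff.mpr hσa, ha⟩).pow_apply,
      coeff_add, coeff_C_mul_X, coeff_C, if_pos, if_neg one_ne_zero, add_zero] at htop
    rw [sum_mul_pow_sub_eq_pow_mul_sum_mul_inv_pow hβ, (smul_eq_zero.mp htop).resolve_right ha,
      mul_zero]
  · have hbot := hcoeff 0 N.succ_pos
    simp only [coeff_zero_homogeneousEval, coeff_add, coeff_C_mul_X, coeff_C_zero,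
      if_neg zero_ne_one, zero_add, LinearMap.smul_apply, neg_mul_symm_pow_apply hγ hβ hτδ hτa,
      smul_smul] at hbot
    exact (smul_eq_zero.mp hbot).resolve_left (mul_ne_zero hcN (prod_ne_zero_iff.mpr
      fun i _ => neg_ne_zero.mpr (inv_ne_zero (mul_ne_zero (pow_ne_zero i hγ) hβ))))

/-- Proposition 2.4 (necessity direction).  Let `R` be a domain over `F` with
automorphism `τ` and `τ`-derivation `δ`, `τδ = γ δτ`, `γ ≠ 0`, and let
`T = R[x; τ, δ]` be the Ore extension, modelled by an injective algebra map
`φ : R → T` and `x ∈ T` with `x φ(a) = φ(τ a) x + φ(δ a)`; the hypothesis `hbasis`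
expresses the unique representation of elements of `T` as `Σ xⁱ rᵢ`.  If `a ≠ 0` is a
`τ`-eigenvector with `τ(a) = β a`, and the FA-relation
`c₀ x^N a + c₁ x^(N-1) a x + ⋯ + c_N a x^N = 0` holds with `c₀ ≠ 0`, `c_N ≠ 0`,
then `f(β) = Σ cᵢ β^(N-i) = 0` and `δ^N(a) = 0`. -/
theorem ore_eigenvalue_root_and_nilpotent {F R T : Type*} [Field F] [Ring R] [IsDomain R]
    [Algebra F R] [Ring T] [Algebra F T]
    (τ : R ≃ₐ[F] R) (δ : Module.End F R)
    (hleib : ∀ a b : R, δ (a * b) = δ a * b + τ a * δ b)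
    (γ : F) (hγ : γ ≠ 0) (hτδ : ∀ a : R, τ (δ a) = γ • δ (τ a))
    (φ : R →ₐ[F] T) (hφ : Function.Injective φ) (x : T)
    (hOre : ∀ a : R, x * φ a = φ (τ a) * x + φ (δ a))
    (hbasis : ∀ (m : ℕ) (r : ℕ → R),
      ∑ i ∈ Finset.range m, x ^ i * φ (r i) = 0 → ∀ i < m, r i = 0)
    (a : R) (ha : a ≠ 0) (β : F) (hτa : τ a = β • a)
    (N : ℕ) (hN : 1 ≤ N) (c : ℕ → F) (hc0 : c 0 ≠ 0) (hcN : c N ≠ 0)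
    (hrel : ∑ i ∈ Finset.range (N + 1), c i • (x ^ (N - i) * φ a * x ^ i) = 0) :
    (∑ i ∈ Finset.range (N + 1), c i * β ^ (N - i)) = 0 ∧ (δ ^ N) a = 0 :=
  ore_eigenvalue_root_and_nilpotent_general τ δ γ hγ hτδ φ x hOre hbasis a ha β hτa N c hcN hrel
end

section
/- Let ε be a primitive l-th root of unity in a field K of characteristic 0, let s be an integer relatively prime to l, and let n = lm + r with 0 ≤ r < l. Then in K[q], the q^s-factorial (n)_{q^s}! = ∏_{j=1}^{n} (q^{sj}−1)/(q^s−1) vanishes at q = ε to order exactly m; that is, (n)_{q^s}! = (q−ε)ᵐ c(q) with c(ε) ≠ 0. -/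
open Polynomial Finset

private lemma rootMultiplicity_prod_aux {K : Type*} [Field K] {ι : Type*} (x : K)
    (t : Finset ι) (f : ι → Polynomial K) (h : ∀ i ∈ t, f i ≠ 0) :
    Polynomial.rootMultiplicity x (∏ i ∈ t, f i)
      = ∑ i ∈ t, Polynomial.rootMultiplicity x (f i) := by
  classical
  induction t using Finset.cons_induction with
  | empty => simpa using Polynomial.rootMultiplicity_C 1 x
  | cons a t ha ih =>
    rw [Finset.prod_cons, Finset.sum_cons,
      Polynomial.rootMultiplicity_mul
        (mul_ne_zero (h a (Finset.mem_cons_self a t))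
          (Finset.prod_ne_zero_iff.2 fun i hi => h i (Finset.mem_cons_of_mem hi))),
      ih fun i hi => h i (Finset.mem_cons_of_mem hi)]

private lemma rootMultiplicity_X_pow_sub_one {K : Type*} [Field K] [CharZero K]
    (ε : K) (N : ℕ) (hN : 0 < N) (hroot : ε ^ N = 1) :
    Polynomial.rootMultiplicity ε ((Polynomial.X : Polynomial K) ^ N - 1) = 1 := by
  have hεne : ε ≠ 0 := by
    intro h; rw [h, zero_pow hN.ne'] at hroot; exact zero_ne_one hroot
  have hne : ((Polynomial.X : Polynomial K) ^ N - 1) ≠ 0 := by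
    intro h
    have := congrArg Polynomial.natDegree h
    have h2 : ((Polynomial.X : Polynomial K) ^ N - 1).natDegree = N := by
      simpa using (Polynomial.natDegree_X_pow_sub_C (n := N) (r := (1 : K)))
    rw [h, Polynomial.natDegree_zero] at h2
    exact hN.ne' h2.symm
  have hisroot : ((Polynomial.X : Polynomial K) ^ N - 1).IsRoot ε := by
    simp [Polynomial.IsRoot, hroot]
  have hd : Polynomial.derivative ((Polynomial.X : Polynomial K) ^ N - 1)
      = (N : Polynomial K) * Polynomial.X ^ (N - 1) := by
    simp [Polynomial.derivative_X_pow]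
  have hdmult : Polynomial.rootMultiplicity ε
      (Polynomial.derivative ((Polynomial.X : Polynomial K) ^ N - 1)) = 0 := by
    apply Polynomial.rootMultiplicity_eq_zero
    rw [hd]
    simp [Polynomial.IsRoot, hεne, Nat.cast_ne_zero, hN.ne']
  have := Polynomial.derivative_rootMultiplicity_of_root hisroot
  have hpos : 0 < Polynomial.rootMultiplicity ε ((Polynomial.X : Polynomial K) ^ N - 1) :=
    (Polynomial.rootMultiplicity_pos hne).2 hisroot
  omega

/-- Let `ε` be a primitive `l`-th root of unity (`l > 1`) in a field `K` of
characteristic `0`, `s` a positive integer relatively prime to `l`, and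
`n = l·m + r` with `0 ≤ r < l`.  Then the `q^s`-factorial
`(n)_{q^s}! = ∏_{j=1}^{n} (q^{sj}−1)/(q^s−1)`, written as the polynomial
`∏_{j=1}^{n} (1 + q^s + ⋯ + q^{s(j-1)}) ∈ K[q]`, vanishes at `q = ε` to order
exactly `m`:  `(n)_{q^s}! = (q−ε)^m c(q)` with `c(ε) ≠ 0`. -/
theorem qFactorial_rootMultiplicity {K : Type*} [Field K] [CharZero K]
    (l : ℕ) (hl : 1 < l) (ε : K) (hε : IsPrimitiveRoot ε l)
    (s : ℕ) (hs : 0 < s) (hsl : Nat.Coprime s l)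
    (m r : ℕ) (hr : r < l) :
    Polynomial.rootMultiplicity ε
      (∏ j ∈ Finset.range (l * m + r),
        ∑ k ∈ Finset.range (j + 1), (Polynomial.X : Polynomial K) ^ (s * k)) = m := by
  classical
  set n := l * m + r with hn
  -- each factor, rewritten as a geometric sum in X^s
  have hfac : ∀ j : ℕ, (∑ k ∈ Finset.range (j + 1), (Polynomial.X : Polynomial K) ^ (s * k))
      = ∑ k ∈ Finset.range (j + 1), ((Polynomial.X : Polynomial K) ^ s) ^ k := by
    intro j; exact Finset.sum_congr rfl fun k _ => by rw [← pow_mul]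
  have hεs : ε ^ s ≠ 1 := by
    rw [Ne, hε.pow_eq_one_iff_dvd]
    intro hdvd
    have := Nat.Coprime.eq_one_of_dvd hsl.symm hdvd
    omega
  -- each factor is nonzero (it evaluates at 1 to j+1 ≠ 0)
  have hne : ∀ j : ℕ, (∑ k ∈ Finset.range (j + 1), (Polynomial.X : Polynomial K) ^ (s * k)) ≠ 0 := by
    intro j h
    have := congrArg (Polynomial.eval (1 : K)) h
    simp [Polynomial.eval_finset_sum] at this
    exact Nat.cast_add_one_ne_zero j this
  rw [rootMultiplicity_prod_aux ε _ _ fun j _ => hne j]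
  -- multiplicity of each factor
  have hmult : ∀ j : ℕ, Polynomial.rootMultiplicity ε
      (∑ k ∈ Finset.range (j + 1), (Polynomial.X : Polynomial K) ^ (s * k))
      = if l ∣ (j + 1) then 1 else 0 := by
    intro j
    have hgeom : (∑ k ∈ Finset.range (j + 1), (Polynomial.X : Polynomial K) ^ (s * k))
        * ((Polynomial.X : Polynomial K) ^ s - 1)
        = (Polynomial.X : Polynomial K) ^ (s * (j + 1)) - 1 := by
      rw [hfac, geom_sum_mul, ← pow_mul]
    by_cases hdvd : l ∣ (j + 1)
    · rw [if_pos hdvd]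
      have hXs_ne : ((Polynomial.X : Polynomial K) ^ s - 1) ≠ 0 := by
        intro h
        have := congrArg (Polynomial.eval ε) h
        simp only [Polynomial.eval_sub, Polynomial.eval_pow, Polynomial.eval_X,
          Polynomial.eval_one, Polynomial.eval_zero, sub_eq_zero] at this
        exact hεs this
      have hXs : Polynomial.rootMultiplicity ε ((Polynomial.X : Polynomial K) ^ s - 1) = 0 := by
        apply Polynomial.rootMultiplicity_eq_zero
        simp only [Polynomial.IsRoot, Polynomial.eval_sub, Polynomial.eval_pow,
          Polynomial.eval_X, Polynomial.eval_one, sub_eq_zero]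
        exact hεs
      have h1 : Polynomial.rootMultiplicity ε
          ((Polynomial.X : Polynomial K) ^ (s * (j + 1)) - 1) = 1 := by
        apply rootMultiplicity_X_pow_sub_one
        · positivity
        · have h1 : ε ^ (j + 1) = 1 := (hε.pow_eq_one_iff_dvd (j + 1)).2 hdvd
          rw [mul_comm, pow_mul, h1, one_pow]
      have := Polynomial.rootMultiplicity_mul (x := ε)
        (p := ∑ k ∈ Finset.range (j + 1), (Polynomial.X : Polynomial K) ^ (s * k))
        (q := (Polynomial.X : Polynomial K) ^ s - 1)
        (mul_ne_zero (hne j) hXs_ne)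
      rw [hgeom, h1, hXs] at this
      omega
    · rw [if_neg hdvd]
      apply Polynomial.rootMultiplicity_eq_zero
      intro hroot
      have heval := congrArg (Polynomial.eval ε) hgeom
      simp only [Polynomial.eval_mul, Polynomial.eval_sub, Polynomial.eval_pow,
        Polynomial.eval_X, Polynomial.eval_one] at heval
      rw [hroot, zero_mul] at heval
      have : ε ^ (s * (j + 1)) = 1 := by linear_combination -heval
      rw [hε.pow_eq_one_iff_dvd] at this
      exact hdvd ((Nat.Coprime.dvd_of_dvd_mul_left (hsl.symm) this))
  calc (∑ j ∈ Finset.range n, Polynomial.rootMultiplicity ε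
          (∑ k ∈ Finset.range (j + 1), (Polynomial.X : Polynomial K) ^ (s * k)))
      = ∑ j ∈ Finset.range n, if l ∣ (j + 1) then 1 else 0 :=
        Finset.sum_congr rfl fun j _ => hmult j
    _ = #{e ∈ Finset.range n | l ∣ e + 1} := (Finset.card_filter _ _).symm
    _ = n / l := Nat.card_multiples n l
    _ = m := by rw [hn, Nat.mul_add_div (by omega), Nat.div_eq_of_lt hr, add_zero]
end

section
/- Let 𝔜 be a (possibly noncommutative) Noetherian domain which is a free module over its center Z(𝔜), with the property that every two-sided ideal of 𝔜 is generated by its intersection with Z(𝔜). Let 𝔍 be a proper two-sided ideal of 𝔜. Then ⋂_{m=1}^{∞} 𝔍ᵐ = 0. -/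
/-!
Let `Z` be the center of `Y` and `J₀ = J ∩ Z`. Since `Y` is free over `Z`, the left ideal `IY`
generated by an ideal `I` of `Z` consists exactly of the elements whose coordinates all lie
in `I`; in particular `I ↦ IY` is injective, so `Z` inherits the Noetherian property from `Y`.
As `J` is generated by `J₀`, every power `Jᵐ` lies in `J₀ᵐY`, so an element of `⋂ Jᵐ` has all
its coordinates in `⋂ J₀ᵐ`, which is zero by Krull's intersection theorem in the domain `Z`.
-/

/-- The `m`-th power of a (two-sided) ideal `J` of a possibly noncommutative ring,
as the left ideal generated by `m`-fold products of elements of `J`. -/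
def idealPowNC {R : Type*} [Ring R] (J : Ideal R) : ℕ → Ideal R
  | 0 => ⊤
  | m + 1 => Ideal.span {x : R | ∃ a ∈ J, ∃ b ∈ idealPowNC J m, x = a * b}

open Module Submodule

section SmulTop

variable {R A : Type*} [CommRing R] [Ring A] [Algebra R A] {I I₀ I₁ : Ideal R}

theorem Ideal.mul_mem_smul_top (y : A) {v : A} (hv : v ∈ I • (⊤ : Submodule R A)) :
    y * v ∈ I • (⊤ : Submodule R A) := by
  induction hv using Submodule.smul_induction_on' with
  | smul r hr a _ => rw [mul_smul_comm]; exact smul_mem_smul hr trivial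
  | add x _ x' _ hx hx' => rw [mul_add]; exact add_mem hx hx'

theorem Ideal.mem_map_algebraMap_iff_mem_smul_top {v : A} :
    v ∈ I.map (algebraMap R A) ↔ v ∈ I • (⊤ : Submodule R A) := by
  constructor
  · intro hv
    induction hv using Submodule.span_induction with
    | mem x hx =>
      obtain ⟨r, hr, rfl⟩ := hx
      rw [Algebra.algebraMap_eq_smul_one]
      exact smul_mem_smul hr trivial
    | zero => exact zero_mem _
    | add x x' _ _ hx hx' => exact add_mem hx hx'
    | smul y x _ hx => exact Ideal.mul_mem_smul_top y hx
  · intro hv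
    induction hv using Submodule.smul_induction_on' with
    | smul r hr a _ =>
      rw [Algebra.smul_def, Algebra.commutes]
      exact Ideal.mul_mem_left _ a (Ideal.mem_map_of_mem _ hr)
    | add x _ x' _ hx hx' => exact add_mem hx hx'

theorem Ideal.mul_mem_map_mul {v w : A} (hv : v ∈ I₀.map (algebraMap R A))
    (hw : w ∈ I₁.map (algebraMap R A)) : v * w ∈ (I₀ * I₁).map (algebraMap R A) := by
  rw [Ideal.mem_map_algebraMap_iff_mem_smul_top] at hv hw ⊢
  induction hv using Submodule.smul_induction_on' with
  | smul r hr a _ =>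
    rw [smul_mul_assoc, Submodule.mul_smul]
    exact smul_mem_smul hr (Ideal.mul_mem_smul_top a hw)
  | add x _ x' _ hx hx' => rw [add_mul]; exact add_mem hx hx'

theorem idealPowNC_le_map_pow {J : Ideal A} (h : J ≤ I.map (algebraMap R A)) :
    ∀ m, idealPowNC J m ≤ (I ^ m).map (algebraMap R A)
  | 0 => by rw [pow_zero, Ideal.one_eq_top, Ideal.map_top]; exact le_top
  | m + 1 => by
    refine Ideal.span_le.mpr ?_
    rintro _ ⟨a, ha, w, hw, rfl⟩
    rw [pow_succ']
    exact Ideal.mul_mem_map_mul (h ha) (idealPowNC_le_map_pow h m hw)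

end SmulTop

namespace Module.Basis

variable {ι R M : Type*} [CommRing R] [AddCommGroup M] [Module R M]

theorem mem_ideal_smul_top_iff (B : Basis ι R M) {I : Ideal R} {x : M} :
    x ∈ I • (⊤ : Submodule R M) ↔ ∀ i, B.repr x i ∈ I := by
  rw [← B.span_eq, mem_ideal_smul_span_iff_exists_sum]
  constructor
  · rintro ⟨a, ha, rfl⟩
    simpa [← Finsupp.linearCombination_apply] using ha
  · exact fun h => ⟨B.repr x, h, B.linearCombination_repr x⟩

variable {A : Type*} [Ring A] [Algebra R A]

theorem mem_map_algebraMap_iff (B : Basis ι R A) {I : Ideal R} {x : A} :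
    x ∈ I.map (algebraMap R A) ↔ ∀ i, B.repr x i ∈ I := by
  rw [Ideal.mem_map_algebraMap_iff_mem_smul_top, B.mem_ideal_smul_top_iff]

theorem comap_map_algebraMap (B : Basis ι R A) [Nontrivial A] (I : Ideal R) :
    (I.map (algebraMap R A)).comap (algebraMap R A) = I := by
  refine le_antisymm (fun z hz => ?_) Ideal.le_comap_map
  obtain ⟨j⟩ := B.index_nonempty
  have hzB : z • B j ∈ I.map (algebraMap R A) := by
    rw [Algebra.smul_def, Algebra.commutes]
    exact Ideal.mul_mem_left _ _ hz
  simpa using B.mem_map_algebraMap_iff.mp hzB j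

theorem isNoetherianRing (B : Basis ι R A) [Nontrivial A] [IsNoetherianRing A] :
    IsNoetherianRing R :=
  have hinj : Function.Injective (Ideal.map (algebraMap R A) : Ideal R → Ideal A) :=
    Function.LeftInverse.injective B.comap_map_algebraMap
  isNoetherian_mk (Monotone.strictMono_of_injective (fun _ _ => Ideal.map_mono) hinj).wellFoundedGT

end Module.Basis

section CentralCoeffs

variable {Y ι : Type*} [Ring Y] (b : ι → Y)

theorem linearIndependent_center_of_central_coeffs
    (hfree : ∀ c : ι →₀ Y, (∀ i, c i ∈ Subring.center Y) →
      (c.sum fun i ci => ci * b i) = 0 → c = 0) :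
    LinearIndependent (Subring.center Y) b := by
  refine linearIndependent_iff.mpr fun l hl => ?_
  have hl₀ : l.mapRange Subtype.val rfl = 0 := hfree _ (fun i => (l i).2) (by
    rw [Finsupp.sum_mapRange_index (by simp)]
    simpa [Finsupp.linearCombination_apply, Subring.smul_def] using hl)
  ext i
  simpa using DFunLike.congr_fun hl₀ i

theorem span_center_eq_top_of_central_coeffs
    (hrepr : ∀ v : Y, ∃ c : ι →₀ Y, (∀ i, c i ∈ Subring.center Y) ∧
      v = c.sum fun i ci => ci * b i) :
    span (Subring.center Y) (Set.range b) = ⊤ := by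
  refine eq_top_iff'.mpr fun v => ?_
  obtain ⟨c, hc, rfl⟩ := hrepr v
  exact sum_mem fun i _ =>
    smul_mem _ (⟨c i, hc i⟩ : Subring.center Y) (subset_span ⟨i, rfl⟩)

end CentralCoeffs

/-- Let `𝔜` be a (possibly noncommutative) Noetherian domain which is free as a
module over its center (witnessed by a basis `b : ι → 𝔜` with unique central
coefficients), such that every two-sided ideal of `𝔜` is generated by its
intersection with the center.  Then for every proper two-sided ideal `J`,
`⋂_{m ≥ 1} Jᵐ = 0`. -/
theorem krull_intersection_noncommutative {Y : Type*} [Ring Y] [IsDomain Y]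
    [IsNoetherianRing Y]
    (ι : Type*) (b : ι → Y)
    (hrepr : ∀ v : Y, ∃ c : ι →₀ Y, (∀ i, c i ∈ Subring.center Y) ∧
      v = c.sum fun i ci => ci * b i)
    (hfree : ∀ c : ι →₀ Y, (∀ i, c i ∈ Subring.center Y) →
      (c.sum fun i ci => ci * b i) = 0 → c = 0)
    (hideals : ∀ I : Ideal Y, (∀ a ∈ I, ∀ r : Y, a * r ∈ I) →
      I = Ideal.span ((I : Set Y) ∩ (Subring.center Y : Set Y)))
    (J : Ideal Y) (hJ2 : ∀ a ∈ J, ∀ r : Y, a * r ∈ J) (hJ : J ≠ ⊤) :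
    ∀ v : Y, (∀ m : ℕ, v ∈ idealPowNC J m) → v = 0 := by
  intro v hv
  let B : Basis ι (Subring.center Y) Y :=
    Basis.mk (linearIndependent_center_of_central_coeffs b hfree)
      (span_center_eq_top_of_central_coeffs b hrepr).ge
  have : IsNoetherianRing (Subring.center Y) := B.isNoetherianRing
  let J₀ := J.comap (algebraMap (Subring.center Y) Y)
  have hJ₀ : J₀ ≠ ⊤ := Ideal.comap_ne_top _ hJ
  have hJ_le : J ≤ J₀.map (algebraMap (Subring.center Y) Y) := by
    refine (hideals J hJ2).trans_le (Ideal.span_le.mpr ?_)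
    rintro x ⟨hxJ, hxZ⟩
    exact Ideal.mem_map_of_mem _ (x := (⟨x, hxZ⟩ : Subring.center Y)) (I := J₀) hxJ
  have hcoeff (i : ι) : B.repr v i ∈ ⨅ m, J₀ ^ m :=
    mem_iInf _ |>.mpr fun m =>
      B.mem_map_algebraMap_iff.mp (idealPowNC_le_map_pow hJ_le m (hv m)) i
  rw [J₀.iInf_pow_eq_bot_of_isDomain hJ₀] at hcoeff
  exact B.ext_elem fun i => by simpa using hcoeff i
end

section
/- Let R be an algebra over C = K[q,q⁻¹], free as a C-module, and let ε ∈ K* be such that specialization q ↦ ε is defined. If u ∈ R is such that u_ε := u mod (q−ε) is central in R_ε := R/(q−ε)R, then the map D_u : R_ε → R_ε defined by D_u(a) = ((u ã − ã u)/(q−ε)) mod (q−ε), for any lift ã of a, is a well-defined K-linear derivation of R_ε. Moreover, for a, b in the center Z_ε of R_ε, the bracket {a,b} := D_ã(b) is a well-defined Poisson bracket on Z_ε (bilinear, antisymmetric, satisfying the Leibniz rule and the Jacobi identity). -/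
/-- Well-definedness of the quantum adjoint action and of the induced Poisson
bracket.  `Rq` models a `C = K[q,q⁻¹]`-algebra which is a free `C`-module, with `q`
a central element; `π : Rq → A` models the specialization `R_ε = Rq/(q−ε)Rq`:
`π` is surjective with kernel `(q−ε)Rq`, and `q−ε` is regular (freeness).  If
`u ∈ Rq` has central image `u_ε = π(u)` in `A`, then there is a (unique) `K`-linear
map `D_u : A → A` with `D_u(a) = ((u ra − ra u)/(q−ε)) mod (q−ε)` for every lift `ra`
of `a`, and `D_u` is a derivation.  Moreover there is a bracket `B` on the center
`Z_ε` of `A`, `B(a,b) = D_ra(b)`, characterized by the analogous lifting property,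
which maps the center to itself and is antisymmetric, bilinear, a derivation in the
second argument, and satisfies the Jacobi identity — a Poisson bracket on `Z_ε`. -/
theorem quantum_adjoint_action_well_defined {K Rq A : Type*} [Field K] [CharZero K]
    [Ring Rq] [Algebra K Rq] [Ring A] [Algebra K A]
    (ε : K) (q : Rq) (hqc : ∀ r : Rq, q * r = r * q)
    (π : Rq →ₐ[K] A) (hsurj : Function.Surjective π)
    (hker : ∀ r : Rq, π r = 0 ↔ ∃ b : Rq, r = (q - algebraMap K Rq ε) * b)
    (hreg : ∀ b : Rq, (q - algebraMap K Rq ε) * b = 0 → b = 0)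
    (u : Rq) (hu : π u ∈ Subalgebra.center K A) :
    (∃ D : A →ₗ[K] A,
      (∀ (a : A) (ra : Rq), π ra = a →
        ∃ b : Rq, π b = D a ∧ u * ra - ra * u = (q - algebraMap K Rq ε) * b) ∧
      (∀ a b : A, D (a * b) = D a * b + a * D b) ∧
      (∀ D' : A →ₗ[K] A,
        (∀ (a : A) (ra : Rq), π ra = a →
          ∃ b : Rq, π b = D' a ∧ u * ra - ra * u = (q - algebraMap K Rq ε) * b) →
        D' = D)) ∧
    (∃ B : A → A → A,
      (∀ (a b : A) (ra rb : Rq), a ∈ Subalgebra.center K A →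
        b ∈ Subalgebra.center K A → π ra = a → π rb = b →
        ∃ c : Rq, π c = B a b ∧ ra * rb - rb * ra = (q - algebraMap K Rq ε) * c) ∧
      (∀ a b : A, a ∈ Subalgebra.center K A → b ∈ Subalgebra.center K A →
        B a b ∈ Subalgebra.center K A) ∧
      (∀ a b : A, a ∈ Subalgebra.center K A → b ∈ Subalgebra.center K A →
        B a b = - B b a) ∧
      (∀ a a' b : A, a ∈ Subalgebra.center K A → a' ∈ Subalgebra.center K A →
        b ∈ Subalgebra.center K A → B (a + a') b = B a b + B a' b) ∧
      (∀ (μ : K) (a b : A), a ∈ Subalgebra.center K A →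
        b ∈ Subalgebra.center K A → B (μ • a) b = μ • B a b) ∧
      (∀ a b c : A, a ∈ Subalgebra.center K A → b ∈ Subalgebra.center K A →
        c ∈ Subalgebra.center K A → B a (b * c) = B a b * c + b * B a c) ∧
      (∀ a b c : A, a ∈ Subalgebra.center K A → b ∈ Subalgebra.center K A →
        c ∈ Subalgebra.center K A →
        B a (B b c) + B b (B c a) + B c (B a b) = 0)) := by
  classical
  set p : Rq := q - algebraMap K Rq ε with hp
  have hpc : ∀ r : Rq, p * r = r * p := by
    intro r
    simp only [hp, sub_mul, mul_sub, hqc r, Algebra.commutes]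
  have hpreg : ∀ b b' : Rq, p * b = p * b' → b = b' := by
    intro b b' h
    have h0 : p * (b - b') = 0 := by rw [mul_sub, h, sub_self]
    exact sub_eq_zero.mp (hreg _ h0)
  let Div : Rq → Rq := fun x => if h : π x = 0 then Classical.choose ((hker x).mp h) else 0
  have hDiv : ∀ x, π x = 0 → x = p * Div x := by
    intro x hx
    simp only [Div, dif_pos hx]
    exact Classical.choose_spec ((hker x).mp hx)
  have hDivEq : ∀ x y, π x = 0 → x = p * y → Div x = y := by
    intro x y hx hxy
    exact hpreg _ _ (by rw [← hDiv x hx, ← hxy])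
  let lift : A → Rq := Function.surjInv hsurj
  have hlift : ∀ a, π (lift a) = a := fun a => Function.surjInv_eq hsurj a
  have hc0l : ∀ r s : Rq, π r ∈ Subalgebra.center K A → π (r * s - s * r) = 0 := by
    intro r s h
    rw [map_sub, map_mul, map_mul, Subalgebra.mem_center_iff.mp h (π s), sub_self]
  have hc0r : ∀ r s : Rq, π s ∈ Subalgebra.center K A → π (r * s - s * r) = 0 := by
    intro r s h
    rw [map_sub, map_mul, map_mul, ← Subalgebra.mem_center_iff.mp h (π r), sub_self]
  have hmp : ∀ x y : Rq, x * (p * y) = p * (x * y) := by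
    intro x y; rw [← mul_assoc, ← hpc, mul_assoc]
  have hcp : ∀ x y : Rq, x * (p * y) - (p * y) * x = p * (x * y - y * x) := by
    intro x y; rw [hmp, mul_assoc, ← mul_sub]
  have hcp' : ∀ x y : Rq, (p * y) * x - x * (p * y) = p * (y * x - x * y) := by
    intro x y; rw [hmp, mul_assoc, ← mul_sub]
  -- the quantum adjoint action
  have keyD : ∀ r r' : Rq, π r = π r' →
      π (Div (u * r - r * u)) = π (Div (u * r' - r' * u)) := by
    intro r r' h
    have h1 : π (r' - r) = 0 := by rw [map_sub, h, sub_self]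
    have hc : r' - r = p * Div (r' - r) := hDiv _ h1
    set c := Div (r' - r) with hcdef
    have e : u * r' - r' * u = (u * r - r * u) + p * (u * c - c * u) := by
      rw [← hcp u c, ← hc]
      noncomm_ring
    have hsplit : Div (u * r' - r' * u) = Div (u * r - r * u) + (u * c - c * u) := by
      apply hDivEq _ _ (hc0l u r' hu)
      rw [e, mul_add, ← hDiv _ (hc0l u r hu)]
    rw [hsplit, map_add, hc0l u c hu, add_zero]
  let Dfun : A → A := fun a => π (Div (u * lift a - lift a * u))
  have hDfun : ∀ a, Dfun a = π (Div (u * lift a - lift a * u)) := fun _ => rfl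
  have hDspec : ∀ (a : A) (ra : Rq), π ra = a → Dfun a = π (Div (u * ra - ra * u)) := by
    intro a ra hra
    exact keyD (lift a) ra (by rw [hlift, hra])
  have hadd : ∀ a b : A, Dfun (a + b) = Dfun a + Dfun b := by
    intro a b
    rw [hDspec (a + b) (lift a + lift b) (by rw [map_add, hlift, hlift])]
    have e : u * (lift a + lift b) - (lift a + lift b) * u
        = (u * lift a - lift a * u) + (u * lift b - lift b * u) := by noncomm_ring
    rw [hDivEq _ (Div (u * lift a - lift a * u) + Div (u * lift b - lift b * u))
        (by rw [e, map_add, hc0l u _ hu, hc0l u _ hu, add_zero])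
        (by rw [e, mul_add, ← hDiv _ (hc0l u _ hu), ← hDiv _ (hc0l u _ hu)]),
      map_add]
  have hsmul : ∀ (μ : K) (a : A), Dfun (μ • a) = μ • Dfun a := by
    intro μ a
    rw [hDspec (μ • a) (μ • lift a) (by rw [map_smul, hlift])]
    have e : u * (μ • lift a) - (μ • lift a) * u = μ • (u * lift a - lift a * u) := by
      rw [mul_smul_comm, smul_mul_assoc, smul_sub]
    rw [hDivEq _ (μ • Div (u * lift a - lift a * u))
        (by rw [e, map_smul, hc0l u _ hu, smul_zero])
        (by rw [e, mul_smul_comm, ← hDiv _ (hc0l u _ hu)]),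
      map_smul]
  -- the Poisson bracket
  let Bfun : A → A → A := fun a b => π (Div (lift a * lift b - lift b * lift a))
  have hBdef : ∀ a b, Bfun a b = π (Div (lift a * lift b - lift b * lift a)) := fun _ _ => rfl
  have keyB : ∀ ra rb ra' rb' : Rq, π ra ∈ Subalgebra.center K A →
      π rb ∈ Subalgebra.center K A → π ra = π ra' → π rb = π rb' →
      π (Div (ra * rb - rb * ra)) = π (Div (ra' * rb' - rb' * ra')) := by
    intro ra rb ra' rb' ha hb h1 h2
    have hc : ra' - ra = p * Div (ra' - ra) := hDiv _ (by rw [map_sub, ← h1, sub_self])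
    have hd : rb' - rb = p * Div (rb' - rb) := hDiv _ (by rw [map_sub, ← h2, sub_self])
    set c := Div (ra' - ra) with hcdef
    set d := Div (rb' - rb) with hddef
    have hra' : ra' = ra + p * c := by rw [← hc]; noncomm_ring
    have hrb' : rb' = rb + p * d := by rw [← hd]; noncomm_ring
    have e : ra' * rb' - rb' * ra' = (ra * rb - rb * ra)
        + p * ((ra * d - d * ra) + (c * rb' - rb' * c)) := by
      rw [mul_add, ← hcp ra d, ← hcp' rb' c]
      rw [hra', hrb']
      noncomm_ring
    have hπa' : π ra' ∈ Subalgebra.center K A := by rw [← h1]; exact ha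
    have hπb' : π rb' ∈ Subalgebra.center K A := by rw [← h2]; exact hb
    have hsplit : Div (ra' * rb' - rb' * ra')
        = Div (ra * rb - rb * ra) + ((ra * d - d * ra) + (c * rb' - rb' * c)) := by
      apply hDivEq _ _ (hc0l ra' rb' hπa')
      rw [e, mul_add p (Div (ra * rb - rb * ra)), ← hDiv _ (hc0l ra rb ha)]
    rw [hsplit, map_add, map_add, hc0l ra d ha, hc0r c rb' hπb', add_zero, add_zero]
  have hBspec : ∀ (a b : A) (ra rb : Rq), a ∈ Subalgebra.center K A →
      b ∈ Subalgebra.center K A → π ra = a → π rb = b →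
      Bfun a b = π (Div (ra * rb - rb * ra)) := by
    intro a b ra rb ha hb hra hrb
    exact keyB (lift a) (lift b) ra rb (by rw [hlift]; exact ha)
      (by rw [hlift]; exact hb) (by rw [hlift, hra]) (by rw [hlift, hrb])
  have hBcen : ∀ a b : A, a ∈ Subalgebra.center K A → b ∈ Subalgebra.center K A →
      Bfun a b ∈ Subalgebra.center K A := by
    intro a b ha hb
    have hacen : π (lift a) ∈ Subalgebra.center K A := by rw [hlift]; exact ha
    have hbcen : π (lift b) ∈ Subalgebra.center K A := by rw [hlift]; exact hb
    rw [hBdef]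
    have hab : lift a * lift b - lift b * lift a
        = p * Div (lift a * lift b - lift b * lift a) := hDiv _ (hc0l _ _ hacen)
    rw [Subalgebra.mem_center_iff]
    intro z
    obtain ⟨s, hs⟩ := hsurj z
    have hx : lift a * s - s * lift a = p * Div (lift a * s - s * lift a) :=
      hDiv _ (hc0l _ _ hacen)
    have hy : lift b * s - s * lift b = p * Div (lift b * s - s * lift b) :=
      hDiv _ (hc0l _ _ hbcen)
    set cab := Div (lift a * lift b - lift b * lift a) with hcabdef
    set x := Div (lift a * s - s * lift a) with hxdef
    set y := Div (lift b * s - s * lift b) with hydef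
    have e : p * (cab * s - s * cab)
        = p * ((lift a * y - y * lift a) - (lift b * x - x * lift b)) := by
      rw [← hcp' s cab, ← hab, mul_sub p, ← hcp (lift a) y, ← hcp (lift b) x, ← hy, ← hx]
      noncomm_ring
    have e2 : cab * s - s * cab
        = (lift a * y - y * lift a) - (lift b * x - x * lift b) := hpreg _ _ e
    have hz : π (cab * s - s * cab) = 0 := by
      rw [e2, map_sub, hc0l _ _ hacen, hc0l _ _ hbcen, sub_zero]
    rw [map_sub, map_mul, map_mul, sub_eq_zero] at hz
    rw [← hs]
    exact hz.symm
  refine ⟨⟨{ toFun := Dfun, map_add' := hadd, map_smul' := hsmul }, ?_, ?_, ?_⟩,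
    Bfun, ?_, hBcen, ?_, ?_, ?_, ?_, ?_⟩
  · -- lifting property for D
    intro a ra hra
    exact ⟨Div (u * ra - ra * u), (hDspec a ra hra).symm, hDiv _ (hc0l u ra hu)⟩
  · -- Leibniz for D
    intro a b
    show Dfun (a * b) = Dfun a * b + a * Dfun b
    rw [hDspec (a * b) (lift a * lift b) (by rw [map_mul, hlift, hlift])]
    have h1 : u * lift a - lift a * u = p * Div (u * lift a - lift a * u) :=
      hDiv _ (hc0l u _ hu)
    have h2 : u * lift b - lift b * u = p * Div (u * lift b - lift b * u) :=
      hDiv _ (hc0l u _ hu)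
    have e : u * (lift a * lift b) - (lift a * lift b) * u
        = p * (Div (u * lift a - lift a * u) * lift b
            + lift a * Div (u * lift b - lift b * u)) := by
      rw [mul_add, ← mul_assoc p, ← hmp (lift a), ← h1, ← h2]
      noncomm_ring
    rw [hDivEq _ _ (hc0l u _ hu) e, map_add, map_mul, map_mul, hlift, hlift]
  · -- uniqueness of D
    intro D' hD'
    ext a
    obtain ⟨b, hb1, hb2⟩ := hD' a (lift a) (hlift a)
    have hb : b = Div (u * lift a - lift a * u) :=
      hpreg _ _ (by rw [← hb2]; exact hDiv _ (hc0l u _ hu))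
    show D' a = Dfun a
    rw [← hb1, hb, hDfun]
  · -- lifting property for B
    intro a b ra rb ha hb hra hrb
    exact ⟨Div (ra * rb - rb * ra), (hBspec a b ra rb ha hb hra hrb).symm,
      hDiv _ (hc0l ra rb (by rw [hra]; exact ha))⟩
  · -- antisymmetry
    intro a b ha hb
    have hacen : π (lift a) ∈ Subalgebra.center K A := by rw [hlift]; exact ha
    have hbcen : π (lift b) ∈ Subalgebra.center K A := by rw [hlift]; exact hb
    rw [hBdef a b, hBdef b a]
    have h1 : π (lift b * lift a - lift a * lift b) = 0 := hc0l _ _ hbcen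
    have e : Div (lift a * lift b - lift b * lift a)
        = - Div (lift b * lift a - lift a * lift b) := by
      apply hDivEq _ _ (hc0l _ _ hacen)
      rw [mul_neg, ← hDiv _ h1, neg_sub]
    rw [e, map_neg]
  · -- additivity in the first argument
    intro a a' b ha ha' hb
    rw [hBspec (a + a') b (lift a + lift a') (lift b) (add_mem ha ha') hb
      (by rw [map_add, hlift, hlift]) (hlift b), hBdef a b, hBdef a' b]
    have e : (lift a + lift a') * lift b - lift b * (lift a + lift a')
        = (lift a * lift b - lift b * lift a) + (lift a' * lift b - lift b * lift a') := by
      noncomm_ring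
    rw [hDivEq _ (Div (lift a * lift b - lift b * lift a)
          + Div (lift a' * lift b - lift b * lift a'))
        (by rw [e, map_add, hc0l _ _ (by rw [hlift]; exact ha),
              hc0l _ _ (by rw [hlift]; exact ha'), add_zero])
        (by rw [e, mul_add, ← hDiv _ (hc0l _ _ (by rw [hlift]; exact ha)),
              ← hDiv _ (hc0l _ _ (by rw [hlift]; exact ha'))]),
      map_add]
  · -- homogeneity in the first argument
    intro μ a b ha hb
    rw [hBspec (μ • a) b (μ • lift a) (lift b) (Subalgebra.smul_mem _ ha μ) hb
      (by rw [map_smul, hlift]) (hlift b), hBdef a b]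
    have e : (μ • lift a) * lift b - lift b * (μ • lift a)
        = μ • (lift a * lift b - lift b * lift a) := by
      rw [smul_mul_assoc, mul_smul_comm, smul_sub]
    rw [hDivEq _ (μ • Div (lift a * lift b - lift b * lift a))
        (by rw [e, map_smul, hc0l _ _ (by rw [hlift]; exact ha), smul_zero])
        (by rw [e, mul_smul_comm, ← hDiv _ (hc0l _ _ (by rw [hlift]; exact ha))]),
      map_smul]
  · -- Leibniz in the second argument
    intro a b c ha hb hc
    have hacen : π (lift a) ∈ Subalgebra.center K A := by rw [hlift]; exact ha
    rw [hBspec a (b * c) (lift a) (lift b * lift c) ha (mul_mem hb hc) (hlift a)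
      (by rw [map_mul, hlift, hlift]), hBdef a b, hBdef a c]
    have h1 : lift a * lift b - lift b * lift a
        = p * Div (lift a * lift b - lift b * lift a) := hDiv _ (hc0l _ _ hacen)
    have h2 : lift a * lift c - lift c * lift a
        = p * Div (lift a * lift c - lift c * lift a) := hDiv _ (hc0l _ _ hacen)
    have e : lift a * (lift b * lift c) - (lift b * lift c) * lift a
        = p * (Div (lift a * lift b - lift b * lift a) * lift c
            + lift b * Div (lift a * lift c - lift c * lift a)) := by
      rw [mul_add, ← mul_assoc p, ← hmp (lift b), ← h1, ← h2]
      noncomm_ring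
    rw [hDivEq _ _ (hc0l _ _ hacen) e, map_add, map_mul, map_mul, hlift, hlift]
  · -- Jacobi identity
    intro a b c ha hb hc
    have hacen : π (lift a) ∈ Subalgebra.center K A := by rw [hlift]; exact ha
    have hbcen : π (lift b) ∈ Subalgebra.center K A := by rw [hlift]; exact hb
    have hccen : π (lift c) ∈ Subalgebra.center K A := by rw [hlift]; exact hc
    have key : ∀ x y : A, x ∈ Subalgebra.center K A → y ∈ Subalgebra.center K A →
        ∃ w : Rq, π w = Bfun x y ∧ lift x * lift y - lift y * lift x = p * w := by
      intro x y hx hy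
      exact ⟨Div _, (hBdef x y).symm, hDiv _ (hc0l _ _ (by rw [hlift]; exact hx))⟩
    obtain ⟨cbc, hcbc1, hcbc2⟩ := key b c hb hc
    obtain ⟨cca, hcca1, hcca2⟩ := key c a hc ha
    obtain ⟨cab, hcab1, hcab2⟩ := key a b ha hb
    have j1 : Bfun a (Bfun b c) = π (Div (lift a * cbc - cbc * lift a)) :=
      hBspec _ _ _ _ ha (hBcen b c hb hc) (hlift a) hcbc1
    have j2 : Bfun b (Bfun c a) = π (Div (lift b * cca - cca * lift b)) :=
      hBspec _ _ _ _ hb (hBcen c a hc ha) (hlift b) hcca1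
    have j3 : Bfun c (Bfun a b) = π (Div (lift c * cab - cab * lift c)) :=
      hBspec _ _ _ _ hc (hBcen a b ha hb) (hlift c) hcab1
    have d1 : lift a * cbc - cbc * lift a = p * Div (lift a * cbc - cbc * lift a) :=
      hDiv _ (hc0l _ _ hacen)
    have d2 : lift b * cca - cca * lift b = p * Div (lift b * cca - cca * lift b) :=
      hDiv _ (hc0l _ _ hbcen)
    have d3 : lift c * cab - cab * lift c = p * Div (lift c * cab - cab * lift c) :=
      hDiv _ (hc0l _ _ hccen)
    have ringJ : (lift a * (p * cbc) - (p * cbc) * lift a)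
        + (lift b * (p * cca) - (p * cca) * lift b)
        + (lift c * (p * cab) - (p * cab) * lift c) = 0 := by
      rw [← hcbc2, ← hcca2, ← hcab2]
      noncomm_ring
    have sum1 : (lift a * cbc - cbc * lift a) + (lift b * cca - cca * lift b)
        + (lift c * cab - cab * lift c) = 0 := by
      apply hreg
      rw [mul_add, mul_add, ← hcp, ← hcp, ← hcp]
      exact ringJ
    have sumDiv : Div (lift a * cbc - cbc * lift a) + Div (lift b * cca - cca * lift b)
        + Div (lift c * cab - cab * lift c) = 0 := by
      apply hreg
      rw [mul_add, mul_add, ← d1, ← d2, ← d3]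
      exact sum1
    rw [j1, j2, j3, ← map_add, ← map_add, sumDiv, map_zero]
end
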